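/- arXiv:1608.05444 — 2 statements merged into one kernel-verified Lean document; each statement's English description precedes it below -/
import Mathlib

section
/- Let H be a navigation history and n ≥ 0. H traverses the history by +(n+1) to H' if and only if H traverses to its forward target f (the ≤-least element of the joint session future) yielding some H'', and H'' traverses the history by +n to H'. -/
structure NavData (α : Type) where
  D : Set α
  A : Set α
  child : α → α → Prop
  le : α → α → Prop
  sim : α → α → Prop

namespace NavData

variable {α : Type}

/-- All the navigation history axioms: finiteness, A ⊆ D, the child relation is a
forest on D, ≤ is a total order on D, ∼ is an equivalence on D, every document has a
unique active ∼-representative, same-session documents share parents, parents precede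
children chronologically. -/
def IsNavHist (H : NavData α) : Prop :=
  H.D.Finite ∧
  H.A ⊆ H.D ∧
  (∀ d e, H.child d e → d ∈ H.D ∧ e ∈ H.D) ∧
  (∀ d, ¬ Relation.TransGen H.child d d) ∧
  (∀ p q e, H.child p e → H.child q e → p = q) ∧
  (∀ d ∈ H.D, H.le d d) ∧
  (∀ d e f, H.le d e → H.le e f → H.le d f) ∧
  (∀ d e, H.le d e → H.le e d → d = e) ∧
  (∀ d e, H.le d e → d ∈ H.D ∧ e ∈ H.D) ∧
  (∀ d ∈ H.D, ∀ e ∈ H.D, H.le d e ∨ H.le e d) ∧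
  (∀ d ∈ H.D, H.sim d d) ∧
  (∀ d e, H.sim d e → H.sim e d) ∧
  (∀ d e f, H.sim d e → H.sim e f → H.sim d f) ∧
  (∀ d e, H.sim d e → d ∈ H.D ∧ e ∈ H.D) ∧
  (∀ d ∈ H.D, ∃! d', d' ∈ H.A ∧ H.sim d d') ∧
  (∀ d e e', H.child d e → H.sim e e' → H.child d e') ∧
  (∀ d e, H.child d e → H.le d e)

/-- Strict chronological order `d < e`. -/
def lt (H : NavData α) (d e : α) : Prop := H.le d e ∧ d ≠ e

/-- `d ≲ e` : same session and strictly earlier. -/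
def before (H : NavData α) (d e : α) : Prop := H.sim d e ∧ H.lt d e

/-- The joint session future: documents strictly later than some active same-session doc. -/
def JSF (H : NavData α) : Set α := { e | ∃ d ∈ H.A, H.before d e }

/-- Traversing the history to `d`: replace A by { e ∈ A | ¬(d ∼ e) } ∪ {d}. -/
def traverseTo (H : NavData α) (d : α) : NavData α :=
  { H with A := { e | (e ∈ H.A ∧ ¬ H.sim d e) ∨ e = d } }

def WellFormed (H : NavData α) : Prop :=
  ∀ a b c d, H.before a b → H.before c d → a ∈ H.A → d ∈ H.A → H.le d b

/-- The forward target: the ≤-least element of the joint session future. -/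
def IsForwardTarget (H : NavData α) (f : α) : Prop :=
  f ∈ H.JSF ∧ ∀ e ∈ H.JSF, H.le f e

def CanGoBack (H : NavData α) (d : α) : Prop := ∃ c, H.before c d

/-- The back target: the ≤-largest active document that can go back. -/
def IsBackTarget (H : NavData α) (b : α) : Prop :=
  b ∈ H.A ∧ H.CanGoBack b ∧ ∀ d ∈ H.A, H.CanGoBack d → H.le d b

/-- `d` is the ≤-largest document with `d ≲ d'`. -/
def IsBackStepTarget (H : NavData α) (d' d : α) : Prop :=
  H.before d d' ∧ ∀ e, H.before e d' → H.le e d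

/-- Traversing the history from `d'`: traversing to the ≤-largest `d` with `d ≲ d'`. -/
def TraverseFrom (H : NavData α) (d' : α) (H' : NavData α) : Prop :=
  ∃ d, H.IsBackStepTarget d' d ∧ H' = H.traverseTo d

/-- `ds` lists the first entries of the joint session future, in increasing order. -/
def FirstOfJSF (H : NavData α) (ds : List α) : Prop :=
  ds.Chain' H.lt ∧ (∀ d ∈ ds, d ∈ H.JSF) ∧
  ∀ e ∈ H.JSF, e ∉ ds → ∀ d ∈ ds, H.lt d e

/-- Patched traversal by +n: traverse successively to each of the first n entries of the
joint session future. -/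
def TraverseByPlus (H : NavData α) (n : ℕ) (H' : NavData α) : Prop :=
  ∃ ds : List α, ds.length = n ∧ H.FirstOfJSF ds ∧ H' = ds.foldl traverseTo H

/-- Patched traversal by −n: traverse successively from each successive back target. -/
inductive TraverseByMinus : NavData α → ℕ → NavData α → Prop
  | zero (H : NavData α) : TraverseByMinus H 0 H
  | succ {H H₁ H' : NavData α} {b : α} {n : ℕ} :
      H.IsBackTarget b → H.TraverseFrom b H₁ → TraverseByMinus H₁ n H' →
      TraverseByMinus H (n + 1) H'

/-- Traversal by an integer delta. -/
def TraverseBy (H : NavData α) (δ : ℤ) (H' : NavData α) : Prop :=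
  if 0 ≤ δ then H.TraverseByPlus δ.toNat H' else TraverseByMinus H (-δ).toNat H'

/-- The active-child relation `d ↠ e`. -/
def activeChild (H : NavData α) (d e : α) : Prop := H.child d e ∧ e ∈ H.A

def IsActiveRoot (H : NavData α) (d : α) : Prop :=
  d ∈ H.A ∧ ∀ e, ¬ H.child e d

/-- Fully active: reachable from an active root by active children. -/
def FullyActive (H : NavData α) (d : α) : Prop :=
  ∃ d₀, H.IsActiveRoot d₀ ∧ Relation.ReflTransGen H.activeChild d₀ d

/-- Restrict a navigation history away from a set `R` of documents. -/
def restrictAway (H : NavData α) (R : Set α) : NavData α where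
  D := H.D \ R
  A := H.A \ R
  child e f := H.child e f ∧ e ∉ R ∧ f ∉ R
  le e f := H.le e f ∧ e ∉ R ∧ f ∉ R
  sim e f := H.sim e f ∧ e ∉ R ∧ f ∉ R

/-- Deleting `d`: removing `d` together with all its →-descendants. -/
def deleteDoc (H : NavData α) (d : α) : NavData α :=
  H.restrictAway { e | Relation.ReflTransGen H.child d e }

/-- Replacing `d` by a fresh `d'`. -/
def replaceDoc (H : NavData α) (d d' : α) : NavData α where
  D := H.D ∪ {d'}
  A := (H.A \ {d}) ∪ {d'}
  child e f := H.child e f ∨ (H.child e d ∧ f = d')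
  le e f := H.le e f ∨ ((e ∈ H.D ∨ e = d') ∧ f = d')
  sim e f := H.sim e f ∨ (e = d' ∧ f = d') ∨ (H.sim e d ∧ f = d') ∨ (H.sim d f ∧ e = d')

/-- Deleting the entire joint session future (each member with its descendants). -/
def deleteJSF (H : NavData α) : NavData α :=
  H.restrictAway { e | ∃ j ∈ H.JSF, Relation.ReflTransGen H.child j e }

/-- Patched navigation from `d` to `d'`: delete the joint session future, then
replace `d` by `d'`. -/
def navigateFrom (H : NavData α) (d d' : α) : NavData α :=
  (H.deleteJSF).replaceDoc d d'

/-- Unpatched traversal by +n: traverse directly to the n-th entry of the joint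
session future (a single traversal). -/
def UnpatchedTraverseByPlus (H : NavData α) (n : ℕ) (H' : NavData α) : Prop :=
  ∃ ds : List α, H.FirstOfJSF ds ∧ ds.length = n ∧
    ∃ d, ds.getLast? = some d ∧ H' = H.traverseTo d

/-! Traversing to the forward target `f` removes exactly `f` from the joint session future
(an active document of `f`'s session is replaced by `f` itself, which precedes everything
that document could reach). Hence the first `n + 1` entries of the old future are `f`
followed by the first `n` entries of the new one, and traversing through them is the same
as first traversing to `f`. -/

namespace IsNavHist

variable {H : NavData α} {d e f : α}

lemma le_refl (hH : H.IsNavHist) (hd : d ∈ H.D) : H.le d d :=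
  hH.2.2.2.2.2.1 d hd

lemma le_trans (hH : H.IsNavHist) : H.le d e → H.le e f → H.le d f :=
  hH.2.2.2.2.2.2.1 d e f

lemma le_antisymm (hH : H.IsNavHist) : H.le d e → H.le e d → d = e :=
  hH.2.2.2.2.2.2.2.1 d e

lemma mem_D_of_le_right (hH : H.IsNavHist) (h : H.le d e) : e ∈ H.D :=
  (hH.2.2.2.2.2.2.2.2.1 d e h).2

lemma sim_symm (hH : H.IsNavHist) : H.sim d e → H.sim e d :=
  hH.2.2.2.2.2.2.2.2.2.2.2.1 d e

lemma sim_trans (hH : H.IsNavHist) : H.sim d e → H.sim e f → H.sim d f :=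
  hH.2.2.2.2.2.2.2.2.2.2.2.2.1 d e f

lemma lt_trans (hH : H.IsNavHist) (hde : H.lt d e) (hef : H.lt e f) : H.lt d f := by
  refine ⟨hH.le_trans hde.1 hef.1, ?_⟩
  rintro rfl
  exact hef.2 (hH.le_antisymm hef.1 hde.1)

lemma before_trans (hH : H.IsNavHist) (hde : H.before d e) (hef : H.before e f) :
    H.before d f :=
  ⟨hH.sim_trans hde.1 hef.1, hH.lt_trans hde.2 hef.2⟩

lemma JSF_traverseTo (hH : H.IsNavHist) (hf : H.IsForwardTarget f) :
    (H.traverseTo f).JSF = H.JSF \ {f} := by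
  obtain ⟨⟨a, ha, haf⟩, hmin⟩ := hf
  ext e
  constructor
  · rintro ⟨d, (⟨hd, hfd⟩ | rfl), hde⟩
    · refine ⟨⟨d, hd, hde⟩, ?_⟩
      rintro rfl
      exact hfd (hH.sim_symm hde.1)
    · exact ⟨⟨a, ha, hH.before_trans haf hde⟩, hde.2.2.symm⟩
  · rintro ⟨⟨b, hb, hbe⟩, hef⟩
    by_cases hfb : H.sim f b
    · exact ⟨f, Or.inr rfl, hH.sim_trans hfb hbe.1, hmin e ⟨b, hb, hbe⟩, Ne.symm hef⟩
    · exact ⟨b, Or.inl ⟨hb, hfb⟩, hbe⟩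

lemma isForwardTarget_of_firstOfJSF_cons (hH : H.IsNavHist) {t : List α}
    (h : H.FirstOfJSF (f :: t)) : H.IsForwardTarget f := by
  obtain ⟨hchain, hmem, hrest⟩ := h
  have hfJ : f ∈ H.JSF := hmem f List.mem_cons_self
  refine ⟨hfJ, fun e he => ?_⟩
  by_cases het : e ∈ f :: t
  · have : Trans H.lt H.lt H.lt := ⟨hH.lt_trans⟩
    rcases List.mem_cons.mp het with rfl | het
    · obtain ⟨d, -, hde⟩ := hfJ
      exact hH.le_refl (hH.mem_D_of_le_right hde.2.1)
    · exact (List.rel_of_pairwise_cons hchain.pairwise het).1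
  · exact (hrest e he het f List.mem_cons_self).1

lemma firstOfJSF_cons_iff (hH : H.IsNavHist) (hf : H.IsForwardTarget f) {t : List α} :
    H.FirstOfJSF (f :: t) ↔ (H.traverseTo f).FirstOfJSF t := by
  have hJ := hH.JSF_traverseTo hf
  have lt_of_mem : ∀ e ∈ H.JSF, e ≠ f → H.lt f e := fun e he hef => ⟨hf.2 e he, hef.symm⟩
  constructor
  · rintro ⟨hchain, hmem, hrest⟩
    have : Trans H.lt H.lt H.lt := ⟨hH.lt_trans⟩
    refine ⟨hchain.tail, fun d hd => ?_, fun e he het d hd => ?_⟩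
    · rw [hJ]
      exact ⟨hmem d (List.mem_cons_of_mem f hd),
        (List.rel_of_pairwise_cons hchain.pairwise hd).2.symm⟩
    · rw [hJ] at he
      refine hrest e he.1 (fun hef => ?_) d (List.mem_cons_of_mem f hd)
      rcases List.mem_cons.mp hef with rfl | het'
      exacts [he.2 rfl, het het']
  · rintro ⟨hchain, hmem, hrest⟩
    have hmem' : ∀ d ∈ t, d ∈ H.JSF \ {f} := hJ ▸ hmem
    refine ⟨List.isChain_cons.2 ⟨fun d hd => ?_, hchain⟩, fun d hd => ?_, fun e he het d hd => ?_⟩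
    · have hdt := List.mem_of_mem_head? hd
      exact lt_of_mem d (hmem' d hdt).1 (hmem' d hdt).2
    · rcases List.mem_cons.mp hd with rfl | hd
      exacts [hf.1, (hmem' d hd).1]
    · have hef : e ≠ f := by rintro rfl; exact het List.mem_cons_self
      rcases List.mem_cons.mp hd with rfl | hd
      · exact lt_of_mem e he hef
      · exact hrest e (hJ ▸ ⟨he, hef⟩) (fun h => het (List.mem_cons_of_mem f h)) d hd

end IsNavHist

end NavData

theorem stmt11 {α : Type} (H : NavData α) (hH : H.IsNavHist)
    (n : ℕ) (H' : NavData α) :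
    H.TraverseByPlus (n + 1) H' ↔
      ∃ f, H.IsForwardTarget f ∧ (H.traverseTo f).TraverseByPlus n H' := by
  constructor
  · rintro ⟨_ | ⟨f, t⟩, hlen, hds, rfl⟩
    · simp at hlen
    have hf := hH.isForwardTarget_of_firstOfJSF_cons hds
    exact ⟨f, hf, t, by simpa using hlen, (hH.firstOfJSF_cons_iff hf).1 hds, rfl⟩
  · rintro ⟨f, hf, t, rfl, ht, rfl⟩
    exact ⟨f :: t, rfl, (hH.firstOfJSF_cons_iff hf).2 ht, rfl⟩
end

section
/- Fundamental property of traversal: for any well-formed navigation history H and integers δ, δ', if H traverses the history by δ to H' and H' traverses the history by δ' to H'', then H traverses the history by δ + δ' to H''. -/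
/-!
A traversal by `+1` goes to the `≤`-least document of the joint session future, a traversal by
`-1` goes back from the `≤`-largest active document that can go back. On well-formed histories
these two single steps are partial functions, preserve well-formedness, and undo each other.
Traversal by `δ` is the `|δ|`-fold iterate of one of them, so in a composite traversal the
backward steps cancel against the forward ones and the step counts add as integers.
-/

section RelPow

variable {β : Type*} {G : β → Prop} {R F B : β → β → Prop}

def RelPow (R : β → β → Prop) : ℕ → β → β → Prop
  | 0, x, y => x = y
  | n + 1, x, z => ∃ y, R x y ∧ RelPow R n y z

def RelZPow (F B : β → β → Prop) (δ : ℤ) : β → β → Prop :=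
  if 0 ≤ δ then RelPow F δ.toNat else RelPow B (-δ).toNat

theorem relPow_add {m n : ℕ} {x z : β} :
    RelPow R (m + n) x z ↔ ∃ y, RelPow R m x y ∧ RelPow R n y z := by
  induction m generalizing x with
  | zero => simp [RelPow]
  | succ m ih =>
    rw [Nat.succ_add]
    simp only [RelPow, ih]
    constructor
    · rintro ⟨w, hxw, y, hwy, hyz⟩
      exact ⟨y, ⟨w, hxw, hwy⟩, hyz⟩
    · rintro ⟨y, ⟨w, hxw, hwy⟩, hyz⟩
      exact ⟨w, hxw, y, hwy, hyz⟩

theorem relPow_succ {n : ℕ} {x z : β} :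
    RelPow R (n + 1) x z ↔ ∃ y, RelPow R n x y ∧ R y z := by
  rw [relPow_add]
  simp [RelPow]

theorem RelPow.preserves (hR : ∀ ⦃x y⦄, G x → R x y → G y) :
    ∀ {n : ℕ} {x y : β}, G x → RelPow R n x y → G y
  | 0, _, _, hx, rfl => hx
  | _ + 1, _, _, hx, ⟨_, hxw, hwy⟩ => RelPow.preserves hR (hR hx hxw) hwy

theorem RelPow.unique (hR : ∀ ⦃x y⦄, G x → R x y → G y)
    (hu : ∀ ⦃x y y'⦄, G x → R x y → R x y' → y = y') :
    ∀ {n : ℕ} {x y y' : β}, G x → RelPow R n x y → RelPow R n x y' → y = y'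
  | 0, _, _, _, _, rfl, rfl => rfl
  | _ + 1, _, _, _, hx, ⟨_, hxw, hwy⟩, ⟨_, hxw', hwy'⟩ => by
    obtain rfl := hu hx hxw hxw'
    exact RelPow.unique hR hu (hR hx hxw) hwy hwy'

theorem relZPow_natCast (n : ℕ) : RelZPow F B n = RelPow F n := by
  simp [RelZPow]

theorem relZPow_neg_natCast (n : ℕ) : RelZPow F B (-n) = RelPow B n := by
  rcases n with _ | n
  · rfl
  · simp only [RelZPow, neg_nonneg, Nat.cast_nonpos, Nat.add_one_ne_zero, if_false, neg_neg,
      Int.toNat_natCast]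

theorem relZPow_swap (δ : ℤ) : RelZPow B F δ = RelZPow F B (-δ) := by
  obtain ⟨n, rfl | rfl⟩ := Int.eq_nat_or_neg δ
  · rw [relZPow_natCast, relZPow_neg_natCast]
  · rw [relZPow_neg_natCast, neg_neg, relZPow_natCast]

structure MutuallyInverseOn (G : β → Prop) (F B : β → β → Prop) : Prop where
  forward_preserves : ∀ ⦃x y⦄, G x → F x y → G y
  backward_preserves : ∀ ⦃x y⦄, G x → B x y → G y
  forward_unique : ∀ ⦃x y y'⦄, G x → F x y → F x y' → y = y'
  backward_unique : ∀ ⦃x y y'⦄, G x → B x y → B x y' → y = y'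
  backward_of_forward : ∀ ⦃x y⦄, G x → F x y → B y x
  forward_of_backward : ∀ ⦃x y⦄, G x → B x y → F y x

namespace MutuallyInverseOn

variable (hI : MutuallyInverseOn G F B)
include hI

theorem symm : MutuallyInverseOn G B F :=
  ⟨hI.backward_preserves, hI.forward_preserves, hI.backward_unique, hI.forward_unique,
    hI.forward_of_backward, hI.backward_of_forward⟩

theorem relPow_backward_of_forward {n : ℕ} {x y : β} (hx : G x) (hxy : RelPow F n x y) :
    RelPow B n y x := by
  induction n generalizing x with
  | zero => exact hxy.symm
  | succ n ih =>
    obtain ⟨w, hxw, hwy⟩ := hxy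
    exact relPow_succ.2 ⟨w, ih (hI.forward_preserves hx hxw) hwy, hI.backward_of_forward hx hxw⟩

theorem relZPow_preserves {δ : ℤ} {x y : β} (hx : G x) (hxy : RelZPow F B δ x y) : G y := by
  unfold RelZPow at hxy
  split_ifs at hxy
  · exact RelPow.preserves hI.forward_preserves hx hxy
  · exact RelPow.preserves hI.backward_preserves hx hxy

/-- A forward walk reverses to a backward walk of the same length, and backward walks of a
given length from a `G`-state are unique, so the shorter walk cancels against the longer. -/
theorem relZPow_sub {m n : ℕ} {x y z : β} (hx : G x) (hxy : RelPow F m x y)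
    (hyz : RelPow B n y z) : RelZPow F B (m - n) x z := by
  have hy := RelPow.preserves hI.forward_preserves hx hxy
  rcases le_total n m with hnm | hmn
  · obtain ⟨k, rfl⟩ := Nat.exists_eq_add_of_le' hnm
    obtain ⟨w, hxw, hwy⟩ := relPow_add.1 hxy
    have hyw := hI.relPow_backward_of_forward (RelPow.preserves hI.forward_preserves hx hxw) hwy
    obtain rfl := RelPow.unique hI.backward_preserves hI.backward_unique hy hyz hyw
    rwa [Nat.cast_add, add_sub_cancel_right, relZPow_natCast]
  · obtain ⟨k, rfl⟩ := Nat.exists_eq_add_of_le hmn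
    obtain ⟨w, hyw, hwz⟩ := relPow_add.1 hyz
    obtain rfl := RelPow.unique hI.backward_preserves hI.backward_unique hy hyw
      (hI.relPow_backward_of_forward hx hxy)
    rwa [Nat.cast_add, sub_add_cancel_left, relZPow_neg_natCast]

theorem relZPow_add {δ δ' : ℤ} {x y z : β} (hx : G x) (hxy : RelZPow F B δ x y)
    (hyz : RelZPow F B δ' y z) : RelZPow F B (δ + δ') x z := by
  obtain ⟨m, rfl | rfl⟩ := Int.eq_nat_or_neg δ <;>
    obtain ⟨n, rfl | rfl⟩ := Int.eq_nat_or_neg δ' <;>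
    simp only [relZPow_natCast, relZPow_neg_natCast] at hxy hyz
  · rw [← Nat.cast_add, relZPow_natCast]
    exact relPow_add.2 ⟨y, hxy, hyz⟩
  · exact hI.relZPow_sub hx hxy hyz
  · rw [neg_add_eq_sub, ← neg_sub, ← relZPow_swap]
    exact hI.symm.relZPow_sub hx hxy hyz
  · rw [← neg_add, ← Nat.cast_add, relZPow_neg_natCast]
    exact relPow_add.2 ⟨y, hxy, hyz⟩

end MutuallyInverseOn

end RelPow

namespace NavData

variable {α : Type} {H : NavData α}

section Axioms

variable (h : H.IsNavHist)
include h

theorem IsNavHist.active_subset : H.A ⊆ H.D := h.2.1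

theorem IsNavHist.le_refl_s12 {d : α} (hd : d ∈ H.D) : H.le d d := h.2.2.2.2.2.1 d hd

theorem IsNavHist.le_trans_s12 {d e f : α} : H.le d e → H.le e f → H.le d f :=
  h.2.2.2.2.2.2.1 d e f

theorem IsNavHist.le_antisymm_s12 {d e : α} : H.le d e → H.le e d → d = e :=
  h.2.2.2.2.2.2.2.1 d e

theorem IsNavHist.le_total {d e : α} (hd : d ∈ H.D) (he : e ∈ H.D) : H.le d e ∨ H.le e d :=
  h.2.2.2.2.2.2.2.2.2.1 d hd e he

theorem IsNavHist.sim_refl {d : α} (hd : d ∈ H.D) : H.sim d d := h.2.2.2.2.2.2.2.2.2.2.1 d hd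

theorem IsNavHist.sim_symm_s12 {d e : α} : H.sim d e → H.sim e d := h.2.2.2.2.2.2.2.2.2.2.2.1 d e

theorem IsNavHist.sim_trans_s12 {d e f : α} : H.sim d e → H.sim e f → H.sim d f :=
  h.2.2.2.2.2.2.2.2.2.2.2.2.1 d e f

theorem IsNavHist.mem_of_sim {d e : α} : H.sim d e → d ∈ H.D ∧ e ∈ H.D :=
  h.2.2.2.2.2.2.2.2.2.2.2.2.2.1 d e

theorem IsNavHist.existsUnique_active {d : α} (hd : d ∈ H.D) :
    ∃! d', d' ∈ H.A ∧ H.sim d d' :=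
  h.2.2.2.2.2.2.2.2.2.2.2.2.2.2.1 d hd

theorem IsNavHist.eq_of_sim {a e : α} (ha : a ∈ H.A) (he : e ∈ H.A) (hae : H.sim a e) :
    a = e :=
  (h.existsUnique_active (h.active_subset ha)).unique ⟨ha, h.sim_refl (h.active_subset ha)⟩
    ⟨he, hae⟩

theorem IsNavHist.lt_of_le_of_lt {a b c : α} (hab : H.le a b) (hbc : H.lt b c) : H.lt a c :=
  ⟨h.le_trans_s12 hab hbc.1, by rintro rfl; exact hbc.2 (h.le_antisymm_s12 hbc.1 hab)⟩

theorem IsNavHist.not_lt_of_le {a b : α} (hab : H.le a b) : ¬ H.lt b a :=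
  fun hba => hba.2 (h.le_antisymm_s12 hba.1 hab)

theorem IsNavHist.before_trans_s12 {a b c : α} (hab : H.before a b) (hbc : H.before b c) :
    H.before a c :=
  ⟨h.sim_trans_s12 hab.1 hbc.1, h.lt_of_le_of_lt hab.2.1 hbc.2⟩

theorem IsNavHist.mem_of_mem_JSF {e : α} (he : e ∈ H.JSF) : e ∈ H.D := by
  obtain ⟨_, _, hae⟩ := he
  exact (h.mem_of_sim hae.1).2

end Axioms

theorem IsNavHist.traverseTo (h : H.IsNavHist) {d : α} (hd : d ∈ H.D) :
    (H.traverseTo d).IsNavHist := by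
  obtain ⟨h1, -, h3, h4, h5, h6, h7, h8, h9, h10, h11, h12, h13, h14, -, h16, h17⟩ := id h
  refine ⟨h1, ?_, h3, h4, h5, h6, h7, h8, h9, h10, h11, h12, h13, h14, fun x hx => ?_, h16, h17⟩
  · rintro e (⟨heA, -⟩ | rfl)
    exacts [h.active_subset heA, hd]
  by_cases hxd : H.sim x d
  · refine ⟨d, ⟨Or.inr rfl, hxd⟩, ?_⟩
    rintro e ⟨⟨-, hde⟩ | rfl, hxe⟩
    · exact absurd (h.sim_trans_s12 (h.sim_symm_s12 hxd) hxe) hde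
    · rfl
  · obtain ⟨a, ⟨haA, hxa⟩, hu⟩ := h.existsUnique_active hx
    have hda : ¬ H.sim d a := fun hda => hxd (h.sim_trans_s12 hxa (h.sim_symm_s12 hda))
    refine ⟨a, ⟨Or.inl ⟨haA, hda⟩, hxa⟩, ?_⟩
    rintro e ⟨⟨heA, -⟩ | rfl, hxe⟩
    · exact hu e ⟨heA, hxe⟩
    · exact absurd hxe hxd

theorem traverseTo_traverseTo_of_sim (h : H.IsNavHist) {a d : α} (ha : a ∈ H.A)
    (had : H.sim a d) : (H.traverseTo d).traverseTo a = H := by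
  suffices hA : {e | (((e ∈ H.A ∧ ¬ H.sim d e) ∨ e = d) ∧ ¬ H.sim a e) ∨ e = a} = H.A by
    simp only [traverseTo, Set.mem_ofPred_eq, hA]
  ext e
  constructor
  · rintro (⟨⟨heA, -⟩ | rfl, hae⟩ | rfl)
    · exact heA
    · exact absurd had hae
    · exact ha
  · intro heA
    by_cases hae : H.sim a e
    · exact Or.inr (h.eq_of_sim ha heA hae).symm
    · exact Or.inl ⟨Or.inl ⟨heA, fun hde => hae (h.sim_trans_s12 had hde)⟩, hae⟩

def ForwardStep (H H' : NavData α) : Prop := ∃ f, H.IsForwardTarget f ∧ H' = H.traverseTo f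

def BackStep (H H' : NavData α) : Prop := ∃ b, H.IsBackTarget b ∧ H.TraverseFrom b H'

section Steps

variable (h : H.IsNavHist)
include h

theorem IsForwardTarget.unique {f g : α} (hf : H.IsForwardTarget f) (hg : H.IsForwardTarget g) :
    f = g :=
  h.le_antisymm_s12 (hf.2 g hg.1) (hg.2 f hf.1)

theorem IsBackTarget.unique {b b' : α} (hb : H.IsBackTarget b) (hb' : H.IsBackTarget b') :
    b = b' :=
  h.le_antisymm_s12 (hb'.2.2 b hb.1 hb.2.1) (hb.2.2 b' hb'.1 hb'.2.1)

theorem IsBackStepTarget.unique {b d d' : α} (hd : H.IsBackStepTarget b d)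
    (hd' : H.IsBackStepTarget b d') : d = d' :=
  h.le_antisymm_s12 (hd'.2 d hd.1) (hd.2 d' hd'.1)

theorem IsForwardTarget.JSF_traverseTo {f : α} (hf : H.IsForwardTarget f) :
    (H.traverseTo f).JSF = H.JSF \ {f} := by
  obtain ⟨⟨a₀, ha₀, ha₀f⟩, hmin⟩ := hf
  ext e
  constructor
  · rintro ⟨a, ⟨haA, hfa⟩ | rfl, hae⟩
    · exact ⟨⟨a, haA, hae⟩, by rintro rfl; exact hfa (h.sim_symm_s12 hae.1)⟩
    · exact ⟨⟨a₀, ha₀, h.before_trans_s12 ha₀f hae⟩, fun hef => hae.2.2 hef.symm⟩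
  · rintro ⟨⟨a, haA, hae⟩, hef⟩
    by_cases hfa : H.sim f a
    · exact ⟨f, Or.inr rfl, h.sim_trans_s12 hfa hae.1, hmin e ⟨a, haA, hae⟩,
        fun hfe => hef hfe.symm⟩
    · exact ⟨a, Or.inl ⟨haA, hfa⟩, hae⟩

theorem IsBackStepTarget.le_of_before {b d b' : α} (hd : H.IsBackStepTarget b d)
    (hdb' : H.before d b') : H.le b b' := by
  rcases h.le_total (h.mem_of_sim hd.1.1).2 (h.mem_of_sim hdb'.1).2 with hbb' | hb'b
  · exact hbb'
  · by_cases hb' : b' = b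
    · exact hb' ▸ hb'b
    · have hb'b : H.before b' b := ⟨h.sim_trans_s12 (h.sim_symm_s12 hdb'.1) hd.1.1, hb'b, hb'⟩
      exact absurd hdb'.2 (h.not_lt_of_le (hd.2 b' hb'b))

variable (hwf : H.WellFormed)
include hwf

theorem IsForwardTarget.wellFormed_traverseTo {f : α} (hf : H.IsForwardTarget f) :
    (H.traverseTo f).WellFormed := by
  obtain ⟨⟨a₀, ha₀, ha₀f⟩, hmin⟩ := hf
  rintro a b c e hab hce (⟨haA, -⟩ | rfl) (⟨heA, -⟩ | rfl)
  · exact hwf a b c e hab hce haA heA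
  · exact hmin b ⟨a, haA, hab⟩
  · exact hwf a₀ b c e (h.before_trans_s12 ha₀f hab) hce ha₀ heA
  · exact hab.2.1

theorem IsBackTarget.wellFormed_traverseTo {b d : α} (hb : H.IsBackTarget b)
    (hd : H.IsBackStepTarget b d) : (H.traverseTo d).WellFormed := by
  rintro a b' c e hab' hce (⟨haA, -⟩ | rfl) (⟨heA, -⟩ | rfl)
  · exact hwf a b' c e hab' hce haA heA
  · exact h.le_trans_s12 hd.1.2.1 (hwf a b' _ b hab' hd.1 haA hb.1)
  · exact h.le_trans_s12 (hb.2.2 e heA ⟨c, hce⟩) (hd.le_of_before h hab')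
  · exact hab'.2.1

/-- After going forward to `f`, the back target is `f`, and traversing from it returns to the
document `a₀ ≲ f` that was active before. -/
theorem IsForwardTarget.backStep_traverseTo {f : α} (hf : H.IsForwardTarget f) :
    BackStep (H.traverseTo f) H := by
  obtain ⟨⟨a₀, ha₀, ha₀f⟩, hmin⟩ := hf
  have hback : (H.traverseTo f).IsBackTarget f := by
    refine ⟨Or.inr rfl, ⟨a₀, ha₀f⟩, ?_⟩
    rintro e (⟨heA, -⟩ | rfl) ⟨c, hce⟩
    · exact hwf a₀ f c e ha₀f hce ha₀ heA
    · exact h.le_refl_s12 (h.mem_of_sim ha₀f.1).2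
  have hstep : (H.traverseTo f).IsBackStepTarget f a₀ := by
    refine ⟨ha₀f, fun e hef => ?_⟩
    rcases h.le_total (h.mem_of_sim hef.1).1 (h.active_subset ha₀) with hea₀ | ha₀e
    · exact hea₀
    · by_cases hea : e = a₀
      · exact hea ▸ ha₀e
      · have heJ : e ∈ H.JSF :=
          ⟨a₀, ha₀, h.sim_trans_s12 ha₀f.1 (h.sim_symm_s12 hef.1), ha₀e, fun h' => hea h'.symm⟩
        exact absurd hef.2 (h.not_lt_of_le (hmin e heJ))
  exact ⟨f, hback, a₀, hstep, (traverseTo_traverseTo_of_sim h ha₀ ha₀f.1).symm⟩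

theorem IsBackTarget.forwardStep_traverseTo {b d : α} (hb : H.IsBackTarget b)
    (hd : H.IsBackStepTarget b d) : ForwardStep (H.traverseTo d) H := by
  refine ⟨b, ⟨⟨d, Or.inr rfl, hd.1⟩, ?_⟩,
    (traverseTo_traverseTo_of_sim h hb.1 (h.sim_symm_s12 hd.1.1)).symm⟩
  rintro e ⟨a, ⟨haA, -⟩ | rfl, hae⟩
  · exact hwf a e d b hae hd.1 haA hb.1
  · exact hd.le_of_before h hae

end Steps

theorem mutuallyInverseOn_forwardStep_backStep :
    MutuallyInverseOn (fun H : NavData α => H.IsNavHist ∧ H.WellFormed)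
      ForwardStep BackStep where
  forward_preserves := by
    rintro H _ ⟨h, hwf⟩ ⟨f, hf, rfl⟩
    exact ⟨h.traverseTo (h.mem_of_mem_JSF hf.1), hf.wellFormed_traverseTo h hwf⟩
  backward_preserves := by
    rintro H _ ⟨h, hwf⟩ ⟨b, hb, d, hd, rfl⟩
    exact ⟨h.traverseTo (h.mem_of_sim hd.1.1).1, hb.wellFormed_traverseTo h hwf hd⟩
  forward_unique := by
    rintro H _ _ ⟨h, -⟩ ⟨f, hf, rfl⟩ ⟨g, hg, rfl⟩
    rw [hf.unique h hg]
  backward_unique := by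
    rintro H _ _ ⟨h, -⟩ ⟨b, hb, d, hd, rfl⟩ ⟨b', hb', d', hd', rfl⟩
    obtain rfl := hb.unique h hb'
    rw [hd.unique h hd']
  backward_of_forward := by
    rintro H _ ⟨h, hwf⟩ ⟨f, hf, rfl⟩
    exact hf.backStep_traverseTo h hwf
  forward_of_backward := by
    rintro H _ ⟨h, hwf⟩ ⟨b, hb, d, hd, rfl⟩
    exact hb.forwardStep_traverseTo h hwf hd

theorem IsNavHist.lt_of_chain_cons (h : H.IsNavHist) {d e : α} {ds : List α}
    (hc : (d :: ds).IsChain H.lt) (he : e ∈ ds) : H.lt d e :=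
  letI : Trans H.lt H.lt H.lt := ⟨fun hab hbc => h.lt_of_le_of_lt hab.1 hbc⟩
  List.rel_of_pairwise_cons (List.IsChain.pairwise hc) he

theorem FirstOfJSF.nil : H.FirstOfJSF [] := ⟨List.isChain_nil, by simp, by simp⟩

section FirstOfJSF

variable (h : H.IsNavHist) {d : α} {ds : List α}
include h

theorem FirstOfJSF.isForwardTarget (hds : H.FirstOfJSF (d :: ds)) : H.IsForwardTarget d := by
  refine ⟨hds.2.1 d List.mem_cons_self, fun e he => ?_⟩
  by_cases hmem : e ∈ d :: ds
  · rcases List.mem_cons.1 hmem with rfl | he'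
    · exact h.le_refl_s12 (h.mem_of_mem_JSF he)
    · exact (h.lt_of_chain_cons hds.1 he').1
  · exact (hds.2.2 e he hmem d List.mem_cons_self).1

theorem FirstOfJSF.traverseTo (hds : H.FirstOfJSF (d :: ds)) :
    (H.traverseTo d).FirstOfJSF ds := by
  rw [FirstOfJSF, (hds.isForwardTarget h).JSF_traverseTo h]
  refine ⟨hds.1.tail, fun e he => ⟨hds.2.1 e (List.mem_cons_of_mem d he),
    (h.lt_of_chain_cons hds.1 he).2.symm⟩, ?_⟩
  rintro e ⟨he, hed⟩ heds x hx
  exact hds.2.2 e he (by simp_all) x (List.mem_cons_of_mem d hx)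

theorem FirstOfJSF.cons (hd : H.IsForwardTarget d) (hds : (H.traverseTo d).FirstOfJSF ds) :
    H.FirstOfJSF (d :: ds) := by
  rw [FirstOfJSF, hd.JSF_traverseTo h] at hds
  obtain ⟨hchain, hmem, hfirst⟩ := hds
  refine ⟨hchain.cons fun x hx => ?_, ?_, fun e he hed x hx => ?_⟩
  · have hx := hmem x (List.mem_of_mem_head? hx)
    exact ⟨hd.2 x hx.1, fun hdx => hx.2 hdx.symm⟩
  · intro e he
    rcases List.mem_cons.1 he with rfl | he
    exacts [hd.1, (hmem e he).1]
  · rcases List.mem_cons.1 hx with rfl | hx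
    · exact ⟨hd.2 e he, fun hxe => hed (hxe ▸ List.mem_cons_self)⟩
    · exact hfirst e ⟨he, fun hed' => hed (hed' ▸ List.mem_cons_self)⟩
        (fun h' => hed (List.mem_cons_of_mem _ h')) x hx

end FirstOfJSF

theorem traverseByPlus_iff (h : H.IsNavHist) {n : ℕ} {H' : NavData α} :
    H.TraverseByPlus n H' ↔ RelPow ForwardStep n H H' := by
  induction n generalizing H with
  | zero =>
    constructor
    · rintro ⟨ds, hlen, -, rfl⟩
      rw [List.length_eq_zero_iff.1 hlen]
      rfl
    · rintro rfl
      exact ⟨[], rfl, FirstOfJSF.nil, rfl⟩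
  | succ n ih =>
    constructor
    · rintro ⟨_ | ⟨d, ds⟩, hlen, hds, rfl⟩
      · cases hlen
      · have hd := hds.isForwardTarget h
        exact ⟨_, ⟨d, hd, rfl⟩, (ih (h.traverseTo (h.mem_of_mem_JSF hd.1))).1
          ⟨ds, Nat.succ.inj hlen, hds.traverseTo h, rfl⟩⟩
    · rintro ⟨_, ⟨d, hd, rfl⟩, hrest⟩
      obtain ⟨ds, hlen, hds, rfl⟩ := (ih (h.traverseTo (h.mem_of_mem_JSF hd.1))).2 hrest
      exact ⟨d :: ds, by simp [hlen], hds.cons h hd, rfl⟩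

theorem traverseByMinus_iff {n : ℕ} {H' : NavData α} :
    TraverseByMinus H n H' ↔ RelPow BackStep n H H' := by
  constructor
  · intro hm
    induction hm with
    | zero => rfl
    | succ hb ht _ ih => exact ⟨_, ⟨_, hb, ht⟩, ih⟩
  · induction n generalizing H with
    | zero => rintro rfl; exact .zero H
    | succ n ih => rintro ⟨_, ⟨b, hb, ht⟩, hrest⟩; exact .succ hb ht (ih hrest)

theorem traverseBy_iff (h : H.IsNavHist) {δ : ℤ} {H' : NavData α} :
    H.TraverseBy δ H' ↔ RelZPow ForwardStep BackStep δ H H' := by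
  unfold TraverseBy RelZPow
  split_ifs
  exacts [traverseByPlus_iff h, traverseByMinus_iff]

end NavData

theorem stmt12 {α : Type} (H H' H'' : NavData α) (hH : H.IsNavHist)
    (hwf : H.WellFormed) (δ δ' : ℤ)
    (h1 : H.TraverseBy δ H') (h2 : H'.TraverseBy δ' H'') :
    H.TraverseBy (δ + δ') H'' := by
  have hI := NavData.mutuallyInverseOn_forwardStep_backStep (α := α)
  rw [NavData.traverseBy_iff hH] at h1 ⊢
  have hH' := hI.relZPow_preserves ⟨hH, hwf⟩ h1
  rw [NavData.traverseBy_iff hH'.1] at h2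
  exact hI.relZPow_add ⟨hH, hwf⟩ h1 h2
end
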